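/- Fix N ≥ 1, d ∈ ℕ^{N+1}, and an integer r with 0 ≤ r ≤ min_i d_i. Then in ℚ[[q]]: Q^r_d = P_r · Σ_{s=0}^{min_i d_i − r} (−1)^s q^{s(s−1)/2} P_s P_{d − r − s}, where d − r − s denotes the dimension vector obtained by subtracting r + s from every component of d, and P_{d−r−s} = Π_{i=0}^N P_{d_i − r − s}. -/

import Mathlib

/-- `m` is a Kostant partition of the dimension vector `d` for the equioriented
type-A quiver with vertices `0, …, N`. -/
def IsKostant (N : ℕ) (d : ℕ → ℕ) (m : ℕ → ℕ → ℕ) : Prop :=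
  (∀ i j : ℕ, ¬(i ≤ j ∧ j ≤ N) → m i j = 0) ∧
  ∀ k ≤ N, d k = ∑ i ∈ Finset.range (k + 1), ∑ j ∈ Finset.Icc k N, m i j

/-- `c(m) = Σ_{1 ≤ i ≤ u ≤ j ≤ v ≤ N} m_{i−1,j−1} · m_{u,v}`. -/
def kpCodim (N : ℕ) (m : ℕ → ℕ → ℕ) : ℕ :=
  ∑ i ∈ Finset.Icc 1 N, ∑ u ∈ Finset.Icc i N, ∑ j ∈ Finset.Icc u N,
    ∑ v ∈ Finset.Icc j N, m (i - 1) (j - 1) * m u v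

/-- `P_s = Π_{t=1}^s (1 − q^t)⁻¹ ∈ ℚ⟦q⟧`. -/
noncomputable def Pq (s : ℕ) : PowerSeries ℚ :=
  ∏ t ∈ Finset.Icc 1 s, (1 - (PowerSeries.X : PowerSeries ℚ) ^ t)⁻¹

/-- `P_m = Π_{0 ≤ i ≤ j ≤ N} P_{m_{ij}}`. -/
noncomputable def PqKP (N : ℕ) (m : ℕ → ℕ → ℕ) : PowerSeries ℚ :=
  ∏ i ∈ Finset.range (N + 1), ∏ j ∈ Finset.Icc i N, Pq (m i j)

/-- `Q^r_d = Σ_{m ⊢ d, m_{0N} = r} q^{c(m)} P_m ∈ ℚ⟦q⟧`. -/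
noncomputable def Qq (N : ℕ) (d : ℕ → ℕ) (r : ℕ) : PowerSeries ℚ :=
  ∑ᶠ m ∈ {m : ℕ → ℕ → ℕ | IsKostant N d m ∧ m 0 N = r},
    (PowerSeries.X : PowerSeries ℚ) ^ kpCodim N m * PqKP N m

/-- `min_{0 ≤ i ≤ N} d_i`. -/
def dmin (N : ℕ) (d : ℕ → ℕ) : ℕ := (Finset.range (N + 1)).inf' ⟨0, by simp⟩ d

open PowerSeries Finset

noncomputable abbrev Xq : PowerSeries ℚ := PowerSeries.X

/-- `(q)_s = ∏_{t=1}^s (1 - q^t)`. -/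
noncomputable def QP (s : ℕ) : PowerSeries ℚ := ∏ t ∈ Finset.Icc 1 s, (1 - Xq ^ t)

lemma constCoeff_one_sub_Xpow (t : ℕ) (ht : 1 ≤ t) :
    constantCoeff (1 - Xq ^ t) ≠ 0 := by
  rw [map_sub, map_pow, map_one, constantCoeff_X, zero_pow (by omega), sub_zero]
  exact one_ne_zero

lemma one_sub_Xpow_mul_inv (t : ℕ) (ht : 1 ≤ t) :
    (1 - Xq ^ t) * (1 - Xq ^ t)⁻¹ = 1 :=
  PowerSeries.mul_inv_cancel _ (constCoeff_one_sub_Xpow t ht)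

lemma QP_zero : QP 0 = 1 := by simp [QP]

lemma Pq_zero : Pq 0 = 1 := by simp [Pq]

lemma QP_mul_Pq (s : ℕ) : QP s * Pq s = 1 := by
  rw [QP, Pq, ← Finset.prod_mul_distrib]
  apply Finset.prod_eq_one
  intro t ht
  exact one_sub_Xpow_mul_inv t (Finset.mem_Icc.1 ht).1

lemma Pq_succ (n : ℕ) : Pq (n + 1) = Pq n * (1 - Xq ^ (n + 1))⁻¹ := by
  rw [Pq, Pq, Finset.prod_Icc_succ_top (by omega)]

lemma QP_succ (n : ℕ) : QP (n + 1) = QP n * (1 - Xq ^ (n + 1)) := by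
  rw [QP, QP, Finset.prod_Icc_succ_top (by omega)]

lemma one_sub_mul_Pq_succ (n : ℕ) : (1 - Xq ^ (n + 1)) * Pq (n + 1) = Pq n := by
  rw [Pq_succ, show (1 - Xq^(n+1)) * (Pq n * (1 - Xq^(n+1))⁻¹)
      = (1 - Xq^(n+1)) * (1 - Xq^(n+1))⁻¹ * Pq n by ring,
    one_sub_Xpow_mul_inv _ (by omega), one_mul]

lemma Xpow_mul_Pq (n : ℕ) : Xq ^ (n + 1) * Pq (n + 1) = Pq (n + 1) - Pq n := by
  linear_combination - one_sub_mul_Pq_succ n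

/-- Gaussian binomial in `ℚ⟦q⟧`, via the Pascal recurrence
`gb (n+1) (s+1) = gb n (s+1) + q^(n-s) * gb n s`. -/
noncomputable def gb : ℕ → ℕ → PowerSeries ℚ
  | 0, 0 => 1
  | 0, _ + 1 => 0
  | _ + 1, 0 => 1
  | n + 1, s + 1 => gb n (s + 1) + Xq ^ (n - s) * gb n s

lemma gb_zero_right (n : ℕ) : gb n 0 = 1 := by cases n <;> rfl

lemma gb_eq_zero {n s : ℕ} (h : n < s) : gb n s = 0 := by
  induction n generalizing s with
  | zero => cases s with
    | zero => omega
    | succ s => rfl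
  | succ n ih =>
    cases s with
    | zero => omega
    | succ s => rw [gb, ih (by omega), ih (by omega), mul_zero, add_zero]

lemma gb_diag (n : ℕ) : gb n n = 1 := by
  induction n with
  | zero => rfl
  | succ n ih => rw [gb, gb_eq_zero (by omega), ih, Nat.sub_self, pow_zero, zero_add, mul_one]

lemma gb_mul_QP {s n : ℕ} (h : s ≤ n) : gb n s * (QP s * QP (n - s)) = QP n := by
  induction n generalizing s with
  | zero =>
    interval_cases s
    simp [gb_zero_right, QP_zero]
  | succ n ih =>
    cases s with
    | zero =>
      simp [gb_zero_right, QP_zero]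
    | succ s =>
      rcases Nat.lt_or_ge s n with hs | hs
      · obtain ⟨k, hk⟩ : ∃ k, n = s + 1 + k := ⟨n - s - 1, by omega⟩
        subst hk
        rw [show s + 1 + k + 1 - (s + 1) = k + 1 from by omega, gb,
          show s + 1 + k - s = k + 1 from by omega]
        have h1 := ih (s := s + 1) (by omega)
        rw [show s + 1 + k - (s + 1) = k from by omega] at h1
        have h2 := ih (s := s) (by omega)
        rw [show s + 1 + k - s = k + 1 from by omega] at h2
        have hx : Xq ^ (s + 1 + k + 1) = Xq ^ (k + 1) * Xq ^ (s + 1) := by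
          rw [← pow_add]; congr 1; omega
        have e1 := QP_succ s
        have e2 := QP_succ k
        have e3 := QP_succ (s + 1 + k)
        linear_combination (1 - Xq^(k+1)) * h1 + Xq^(k+1)*(1 - Xq^(s+1)) * h2
          + gb (s+1+k) (s+1) * QP (s+1) * e2 + Xq^(k+1) * gb (s+1+k) s * QP (k+1) * e1
          - e3 + QP (s+1+k) * hx
      · have hsn : s = n := by omega
        subst hsn
        rw [gb, gb_eq_zero (by omega), gb_diag, Nat.sub_self, Nat.sub_self, pow_zero,
          QP_zero, mul_one, mul_one, zero_add, one_mul]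

lemma Pq_mul_Pq {s n : ℕ} (h : s ≤ n) : Pq s * Pq (n - s) = gb n s * Pq n := by
  have key : (QP s * QP (n - s)) * (Pq s * Pq (n - s)) = 1 := by
    rw [show (QP s * QP (n-s)) * (Pq s * Pq (n-s)) = (QP s * Pq s) * (QP (n-s) * Pq (n-s)) by ring,
      QP_mul_Pq, QP_mul_Pq, one_mul]
  calc Pq s * Pq (n - s) = (QP n * Pq n) * (Pq s * Pq (n - s)) := by rw [QP_mul_Pq, one_mul]
    _ = (gb n s * (QP s * QP (n - s))) * Pq n * (Pq s * Pq (n - s)) := by rw [gb_mul_QP h]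
    _ = (gb n s * Pq n) * ((QP s * QP (n - s)) * (Pq s * Pq (n - s))) := by ring
    _ = gb n s * Pq n := by rw [key, mul_one]

lemma choose_two_succ (x : ℕ) : (x + 1).choose 2 = x + x.choose 2 := by
  rw [show (2:ℕ) = 1 + 1 from rfl, Nat.choose_succ_succ, Nat.choose_one_right]

/-- Alternating sum of Gaussian binomials vanishes. -/
lemma gb_alt (n : ℕ) :
    ∑ s ∈ Finset.range (n + 1), (-1 : PowerSeries ℚ) ^ s * Xq ^ s.choose 2 * gb n s
      = if n = 0 then 1 else 0 := by
  induction n with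
  | zero => simp [gb_zero_right]
  | succ n ih =>
    set f' : ℕ → PowerSeries ℚ := fun s => (-1 : PowerSeries ℚ) ^ s * Xq ^ s.choose 2 * gb n s
      with hf'
    have key : ∀ x ∈ Finset.range (n+1),
        (-1 : PowerSeries ℚ) ^ (x+1) * Xq ^ (x+1).choose 2 * gb (n+1) (x+1)
          = f' (x+1) + (-(Xq^n)) * f' x := by
      intro x hx
      have hxn : x ≤ n := by simpa using Nat.lt_succ_iff.mp (Finset.mem_range.mp hx)
      rw [show gb (n+1) (x+1) = gb n (x+1) + Xq ^ (n - x) * gb n x from rfl]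
      have hpow : Xq ^ ((x+1).choose 2) * Xq ^ (n - x) = Xq ^ n * Xq ^ (x.choose 2) := by
        rw [← pow_add, ← pow_add]
        congr 1
        have := choose_two_succ x
        omega
      rw [hf']
      simp only []
      rw [pow_succ]
      linear_combination (-((-1 : PowerSeries ℚ)^x) * gb n x) * hpow
    have hsum : ∑ s ∈ Finset.range (n + 2),
        (-1 : PowerSeries ℚ) ^ s * Xq ^ s.choose 2 * gb (n+1) s
        = (∑ x ∈ Finset.range (n+1), f' (x+1)) + (∑ x ∈ Finset.range (n+1), (-(Xq^n)) * f' x)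
          + 1 := by
      rw [Finset.sum_range_succ'
        (fun s => (-1 : PowerSeries ℚ) ^ s * Xq ^ s.choose 2 * gb (n+1) s) (n+1)]
      rw [Finset.sum_congr rfl key, Finset.sum_add_distrib]
      simp [gb_zero_right]
    have h1 : (∑ x ∈ Finset.range (n+1), f' (x+1)) + 1 = ∑ s ∈ Finset.range (n+1), f' s := by
      have e1 : ∑ s ∈ Finset.range (n + 2), f' s
          = (∑ x ∈ Finset.range (n+1), f' (x+1)) + f' 0 := Finset.sum_range_succ' f' (n+1)
      have e2 : ∑ s ∈ Finset.range (n + 2), f' s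
          = (∑ s ∈ Finset.range (n+1), f' s) + f' (n+1) := Finset.sum_range_succ f' (n+1)
      have e3 : f' (n+1) = 0 := by
        rw [hf']; simp only []; rw [gb_eq_zero (by omega), mul_zero]
      have e4 : f' 0 = 1 := by rw [hf']; simp [gb_zero_right]
      rw [e4] at e1
      rw [e3, add_zero] at e2
      rw [← e1, e2]
    have h2 : ∑ x ∈ Finset.range (n+1), (-(Xq^n)) * f' x
        = (-(Xq^n)) * ∑ s ∈ Finset.range (n+1), f' s := by rw [Finset.mul_sum]
    rw [hsum, add_right_comm, h1, h2, ← hf', ih]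
    cases n with
    | zero => simp
    | succ n => simp

lemma Pq_alt (n : ℕ) :
    ∑ s ∈ Finset.range (n+1), (-1 : PowerSeries ℚ)^s * Xq^(s.choose 2) * Pq s * Pq (n-s)
      = if n = 0 then 1 else 0 := by
  have key : ∀ s ∈ Finset.range (n+1),
      (-1 : PowerSeries ℚ)^s * Xq^(s.choose 2) * Pq s * Pq (n-s)
        = ((-1 : PowerSeries ℚ)^s * Xq^(s.choose 2) * gb n s) * Pq n := by
    intro s hs
    have hsn : s ≤ n := by
      have := Finset.mem_range.mp hs; omega
    linear_combination ((-1 : PowerSeries ℚ)^s * Xq^(s.choose 2)) * Pq_mul_Pq hsn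
  rw [Finset.sum_congr rfl key, ← Finset.sum_mul, gb_alt]
  split
  · rename_i h; subst h; rw [one_mul, Pq_zero]
  · rw [zero_mul]

/-- The key Durfee-type identity, `gb` form. -/
lemma sum_gb_Pq (b n : ℕ) :
    ∑ a ∈ Finset.range (n+1), Xq ^ ((b-a)*(n-a)) * gb b a * Pq (n-a) = Pq n := by
  induction b with
  | zero =>
    rw [Finset.sum_eq_single_of_mem 0 (by simp)]
    · simp [gb_zero_right]
    · intro a _ ha
      rw [gb_eq_zero (by omega), mul_zero, zero_mul]
  | succ b ih =>
    have L1 : (∑ a ∈ Finset.range (n+1), Xq ^ ((b+1-a)*(n-a)) * gb (b+1) a * Pq (n-a))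
        = (∑ a ∈ Finset.range (n+1), Xq ^ ((b-a)*(n-a)) * gb b a * (Xq^(n-a) * Pq (n-a)))
          + ∑ c ∈ Finset.range n, Xq ^ ((b-c)*(n-c)) * gb b c * Pq (n-1-c) := by
      rw [Finset.sum_range_succ'
        (fun a => Xq ^ ((b+1-a)*(n-a)) * gb (b+1) a * Pq (n-a)) n]
      rw [Finset.sum_range_succ'
        (fun a => Xq ^ ((b-a)*(n-a)) * gb b a * (Xq^(n-a) * Pq (n-a))) n]
      have key : ∀ x ∈ Finset.range n,
          Xq ^ ((b+1-(x+1))*(n-(x+1))) * gb (b+1) (x+1) * Pq (n-(x+1))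
            = Xq ^ ((b-(x+1))*(n-(x+1))) * gb b (x+1) * (Xq^(n-(x+1)) * Pq (n-(x+1)))
              + Xq ^ ((b-x)*(n-x)) * gb b x * Pq (n-1-x) := by
        intro x hx
        have hx' : x < n := Finset.mem_range.mp hx
        rw [show b+1-(x+1) = b-x from by omega, show n-(x+1) = n-1-x from by omega,
          show gb (b+1) (x+1) = gb b (x+1) + Xq ^ (b - x) * gb b x from rfl]
        have e2 : (Xq : PowerSeries ℚ)^((b-x)*(n-1-x)) * Xq^(b-x) = Xq^((b-x)*(n-x)) := by
          rw [← pow_add]; congr 1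
          rw [show n-x = (n-1-x)+1 from by omega, Nat.mul_succ]
        rcases le_or_gt (x+1) b with hxb | hxb
        · have e1 : (Xq : PowerSeries ℚ)^((b-x)*(n-1-x))
              = Xq^((b-(x+1))*(n-1-x)) * Xq^(n-1-x) := by
            rw [← pow_add]; congr 1
            rw [show b-x = (b-(x+1))+1 from by omega, Nat.succ_mul]
          linear_combination (gb b (x+1) * Pq (n-1-x)) * e1 + (gb b x * Pq (n-1-x)) * e2
        · rw [gb_eq_zero (show b < x+1 from by omega)]
          linear_combination (gb b x * Pq (n-1-x)) * e2
      rw [Finset.sum_congr rfl key, Finset.sum_add_distrib]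
      have h0 : Xq ^ ((b+1-0)*(n-0)) * gb (b+1) 0 * Pq (n-0)
          = Xq ^ ((b-0)*(n-0)) * gb b 0 * (Xq^(n-0) * Pq (n-0)) := by
        simp only [Nat.sub_zero, gb_zero_right, mul_one]
        rw [show (b+1)*n = b*n + n from by ring, pow_add]
        ring
      rw [h0]; ring
    have L2 : (∑ a ∈ Finset.range (n+1), Xq ^ ((b-a)*(n-a)) * gb b a * (Xq^(n-a) * Pq (n-a)))
        = (∑ a ∈ Finset.range (n+1), Xq ^ ((b-a)*(n-a)) * gb b a * Pq (n-a))
          - ∑ c ∈ Finset.range n, Xq ^ ((b-c)*(n-c)) * gb b c * Pq (n-1-c) := by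
      rw [Finset.sum_range_succ
        (fun a => Xq ^ ((b-a)*(n-a)) * gb b a * (Xq^(n-a) * Pq (n-a))) n]
      rw [Finset.sum_range_succ
        (fun a => Xq ^ ((b-a)*(n-a)) * gb b a * Pq (n-a)) n]
      have key : ∀ a ∈ Finset.range n,
          Xq ^ ((b-a)*(n-a)) * gb b a * (Xq^(n-a) * Pq (n-a))
            = Xq ^ ((b-a)*(n-a)) * gb b a * Pq (n-a)
              - Xq ^ ((b-a)*(n-a)) * gb b a * Pq (n-1-a) := by
        intro a ha
        have ha' : a < n := Finset.mem_range.mp ha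
        rw [show n-a = (n-1-a)+1 from by omega, Xpow_mul_Pq (n-1-a)]
        ring
      rw [Finset.sum_congr rfl key, Finset.sum_sub_distrib]
      simp only [Nat.sub_self, pow_zero, one_mul, mul_one]
      ring
    rw [L1, L2, ih]
    ring

/-- The key Durfee-type identity. -/
lemma sum_T (b n : ℕ) :
    ∑ a ∈ Finset.range (min b n + 1), Xq ^ ((b-a)*(n-a)) * (Pq (b-a) * Pq a) * Pq (n-a)
      = Pq b * Pq n := by
  have conv : ∑ a ∈ Finset.range (min b n + 1), Xq^((b-a)*(n-a)) * (Pq (b-a) * Pq a) * Pq (n-a)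
      = ∑ a ∈ Finset.range (n+1), Xq^((b-a)*(n-a)) * (gb b a * Pq b) * Pq (n-a) := by
    have hterm : ∀ a, a ≤ b → Xq^((b-a)*(n-a)) * (Pq (b-a) * Pq a) * Pq (n-a)
        = Xq^((b-a)*(n-a)) * (gb b a * Pq b) * Pq (n-a) := by
      intro a hab
      have := Pq_mul_Pq (s := a) (n := b) hab
      linear_combination (Xq^((b-a)*(n-a)) * Pq (n-a)) * this
    rcases le_or_gt b n with hbn | hbn
    · rw [min_eq_left hbn]
      rw [Finset.sum_congr rfl (fun a ha => hterm a (by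
        have := Finset.mem_range.mp ha; omega))]
      apply Finset.sum_subset (by
        apply Finset.range_subset_range.mpr; omega)
      intro a _ ha
      rw [gb_eq_zero (by
        have : ¬ a < b + 1 := fun hc => ha (Finset.mem_range.mpr hc)
        omega), zero_mul, mul_zero, zero_mul]
    · rw [min_eq_right (by omega)]
      exact Finset.sum_congr rfl (fun a ha => hterm a (by
        have := Finset.mem_range.mp ha; omega))
  rw [conv]
  calc ∑ a ∈ Finset.range (n+1), Xq^((b-a)*(n-a)) * (gb b a * Pq b) * Pq (n-a)
      = Pq b * ∑ a ∈ Finset.range (n+1), Xq^((b-a)*(n-a)) * gb b a * Pq (n-a) := by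
        rw [Finset.mul_sum]
        exact Finset.sum_congr rfl (fun a _ => by ring)
    _ = Pq b * Pq n := by rw [sum_gb_Pq]


section Finiteness

lemma finite_bdd1 (g : ℕ → ℕ) (M : ℕ) (hg : ∀ i, M < i → g i = 0) :
    {a : ℕ → ℕ | ∀ i, a i ≤ g i}.Finite := by
  set D := (Finset.range (M+1)).sup g with hD
  have hDle : ∀ i, g i ≤ D := by
    intro i
    rcases le_or_gt i M with h | h
    · exact Finset.le_sup (Finset.mem_range.mpr (by omega))
    · rw [hg i h]; exact Nat.zero_le _
  apply Set.Finite.of_finite_image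
    (f := fun a => fun i : Fin (M+1) =>
      (⟨min (a i) D, Nat.lt_succ_of_le (min_le_right _ _)⟩ : Fin (D+1)))
  · exact Set.toFinite _
  · intro a ha a' ha' h
    funext i
    rcases le_or_gt i M with hi | hi
    · have := congrFun h ⟨i, by omega⟩
      simp only [Fin.mk.injEq] at this
      rwa [min_eq_left (le_trans (ha i) (hDle i)),
        min_eq_left (le_trans (ha' i) (hDle i))] at this
    · have h1 := ha i; have h2 := ha' i
      rw [hg i hi] at h1 h2
      omega

lemma finite_bdd2 (g : ℕ → ℕ → ℕ) (M : ℕ) (hg : ∀ i j, M < i ∨ M < j → g i j = 0) :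
    {m : ℕ → ℕ → ℕ | ∀ i j, m i j ≤ g i j}.Finite := by
  set D := (Finset.range (M+1)).sup (fun i => (Finset.range (M+1)).sup (g i)) with hD
  have hDle : ∀ i j, g i j ≤ D := by
    intro i j
    rcases le_or_gt i M with h | h
    · rcases le_or_gt j M with h' | h'
      · exact le_trans (Finset.le_sup (Finset.mem_range.mpr (by omega)))
          (Finset.le_sup (f := fun i => (Finset.range (M+1)).sup (g i))
            (Finset.mem_range.mpr (by omega)))
      · rw [hg i j (Or.inr h')]; exact Nat.zero_le _
    · rw [hg i j (Or.inl h)]; exact Nat.zero_le _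
  apply Set.Finite.of_finite_image
    (f := fun m => fun p : Fin (M+1) × Fin (M+1) =>
      (⟨min (m p.1 p.2) D, Nat.lt_succ_of_le (min_le_right _ _)⟩ : Fin (D+1)))
  · exact Set.toFinite _
  · intro m hm m' hm' h
    funext i j
    rcases le_or_gt i M with hi | hi
    · rcases le_or_gt j M with hj | hj
      · have := congrFun h (⟨i, by omega⟩, ⟨j, by omega⟩)
        simp only [Fin.mk.injEq] at this
        rwa [min_eq_left (le_trans (hm i j) (hDle i j)),
          min_eq_left (le_trans (hm' i j) (hDle i j))] at this
      · have h1 := hm i j; have h2 := hm' i j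
        rw [hg i j (Or.inr hj)] at h1 h2; omega
    · have h1 := hm i j; have h2 := hm' i j
      rw [hg i j (Or.inl hi)] at h1 h2; omega

end Finiteness

section Stuple

/-- Compositions of `n` into parts `a 0, …, a M` with `a i ≤ b i` for `i < M`. -/
def Tset (M : ℕ) (b : ℕ → ℕ) (n : ℕ) : Set (ℕ → ℕ) :=
  {a | (∀ i, M < i → a i = 0) ∧ (∀ i, i < M → a i ≤ b i) ∧ (∑ i ∈ Finset.range (M+1), a i) = n}

def Esum (M : ℕ) (b a : ℕ → ℕ) : ℕ :=
  ∑ v ∈ Finset.range M, a (v+1) * ∑ i ∈ Finset.range (v+1), (b i - a i)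

lemma Tset_finite (M : ℕ) (b : ℕ → ℕ) (n : ℕ) : (Tset M b n).Finite := by
  apply (finite_bdd1 (fun i => if i ≤ M then n else 0) M (fun i hi => by simp [Nat.not_le.mpr hi])).subset
  rintro a ⟨h1, _, h3⟩ i
  show a i ≤ if i ≤ M then n else 0
  split
  · rename_i hi
    calc a i ≤ ∑ j ∈ Finset.range (M+1), a j :=
      Finset.single_le_sum (fun _ _ => Nat.zero_le _) (Finset.mem_range.mpr (by omega))
    _ = n := h3
  · rename_i hi
    rw [h1 i (by omega)]

def consF (a0 : ℕ) (a : ℕ → ℕ) : ℕ → ℕ := fun i => match i with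
  | 0 => a0
  | j+1 => a j

lemma finsum_mem_finite_eq_sum {α : Type*} (S : Set α) (hS : S.Finite) (f : α → PowerSeries ℚ) :
    ∑ᶠ x ∈ S, f x = ∑ x ∈ hS.toFinset, f x := by
  rw [← finsum_mem_coe_finset, Set.Finite.coe_toFinset]

lemma Tset_decomp (M : ℕ) (b : ℕ → ℕ) (n : ℕ) :
    Tset (M+1) b n = ⋃ a0 ∈ (↑(Finset.range (min (b 0) n + 1)) : Set ℕ),
      (consF a0) '' Tset M (fun i => b (i+1)) (n - a0) := by
  ext a
  simp only [Set.mem_iUnion, Finset.coe_sort_coe, Set.mem_image, Finset.mem_coe,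
    Finset.mem_range]
  constructor
  · rintro ⟨h1, h2, h3⟩
    have ha0n : a 0 ≤ n := by
      rw [← h3]
      exact Finset.single_le_sum (fun _ _ => Nat.zero_le _) (Finset.mem_range.mpr (by omega))
    have ha0b : a 0 ≤ b 0 := h2 0 (by omega)
    refine ⟨a 0, by omega, fun i => a (i+1), ⟨fun i hi => h1 (i+1) (by omega),
      fun i hi => h2 (i+1) (by omega), ?_⟩, ?_⟩
    · have h4 := Finset.sum_range_succ' a (M+1)
      rw [h3] at h4
      have h5 : ∑ i ∈ Finset.range (M+1), a (i+1) = n - a 0 := by omega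
      exact h5
    · funext i
      cases i with
      | zero => rfl
      | succ j => rfl
  · rintro ⟨a0, ha0, a', ⟨h1, h2, h3⟩, rfl⟩
    have ha0 : a0 ≤ min (b 0) n := by omega
    refine ⟨fun i hi => ?_, fun i hi => ?_, ?_⟩
    · match i, hi with
      | j+1, hi => exact h1 j (by omega)
    · match i with
      | 0 => exact le_trans ha0 (min_le_left _ _)
      | j+1 => exact h2 j (by omega)
    · rw [Finset.sum_range_succ' (consF a0 a') (M+1)]
      have e : ∀ x ∈ Finset.range (M+1), consF a0 a' (x+1) = a' x := fun x _ => rfl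
      rw [Finset.sum_congr rfl e]
      have : consF a0 a' 0 = a0 := rfl
      rw [this, h3]
      omega

lemma Esum_cons (M : ℕ) (b : ℕ → ℕ) (n a0 : ℕ) (a' : ℕ → ℕ)
    (ha' : a' ∈ Tset M (fun i => b (i+1)) (n - a0)) :
    Esum (M+1) b (consF a0 a') = (b 0 - a0) * (n - a0) + Esum M (fun i => b (i+1)) a' := by
  obtain ⟨h1, h2, h3⟩ := ha'
  rw [Esum]
  have key : ∀ v ∈ Finset.range (M+1),
      consF a0 a' (v+1) * ∑ i ∈ Finset.range (v+1), (b i - consF a0 a' i)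
        = a' v * (b 0 - a0) + a' v * ∑ i ∈ Finset.range v, (b (i+1) - a' i) := by
    intro v _
    have e1 : consF a0 a' (v+1) = a' v := rfl
    rw [e1, Finset.sum_range_succ' (fun i => b i - consF a0 a' i) v]
    have e2 : ∀ x ∈ Finset.range v, b (x+1) - consF a0 a' (x+1) = b (x+1) - a' x :=
      fun x _ => rfl
    rw [Finset.sum_congr rfl e2]
    have e3 : b 0 - consF a0 a' 0 = b 0 - a0 := rfl
    rw [e3, Nat.mul_add]
    ring
  rw [Finset.sum_congr rfl key, Finset.sum_add_distrib]
  have e4 : ∑ v ∈ Finset.range (M+1), a' v * (b 0 - a0) = (b 0 - a0) * (n - a0) := by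
    rw [← Finset.sum_mul, h3, Nat.mul_comm]
  rw [e4, Esum]
  congr 1
  rw [Finset.sum_range_succ' (fun v => a' v * ∑ i ∈ Finset.range v, (b (i+1) - a' i)) M]
  simp

lemma Stuple : ∀ (M : ℕ) (b : ℕ → ℕ) (n : ℕ),
    (∑ᶠ a ∈ Tset M b n,
      Xq ^ Esum M b a * ((∏ i ∈ Finset.range M, (Pq (b i - a i) * Pq (a i))) * Pq (a M)))
      = Pq n * ∏ i ∈ Finset.range M, Pq (b i) := by
  intro M
  induction M with
  | zero =>
    intro b n
    have hT : Tset 0 b n = {fun i => if i = 0 then n else 0} := by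
      ext a
      simp only [Tset, Set.mem_setOf_eq, Set.mem_singleton_iff]
      constructor
      · rintro ⟨h1, _, h3⟩
        funext i
        rcases Nat.eq_zero_or_pos i with hi | hi
        · subst hi
          simp only [if_pos rfl]
          rw [Finset.sum_range_one] at h3
          exact h3
        · rw [if_neg (by omega), h1 i (by omega)]
      · rintro rfl
        exact ⟨fun i hi => if_neg (by omega), fun i hi => by omega,
          by rw [Finset.sum_range_one]; simp⟩
    rw [hT, finsum_mem_singleton]
    simp [Esum, Pq_zero]
  | succ M ih =>
    intro b n
    rw [Tset_decomp]
    rw [finsum_mem_biUnion]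
    · have inner : ∀ a0 ∈ (↑(Finset.range (min (b 0) n + 1)) : Set ℕ),
          (∑ᶠ a ∈ (consF a0) '' Tset M (fun i => b (i+1)) (n - a0),
            Xq ^ Esum (M+1) b a *
              ((∏ i ∈ Finset.range (M+1), (Pq (b i - a i) * Pq (a i))) * Pq (a (M+1))))
          = Xq ^ ((b 0 - a0)*(n - a0)) * (Pq (b 0 - a0) * Pq a0) *
              (Pq (n - a0) * ∏ i ∈ Finset.range M, Pq (b (i+1))) := by
        intro a0 ha0
        rw [finsum_mem_image (by
          intro x _ y _ h
          funext i
          exact congrFun h (i+1))]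
        have hval : ∀ a' ∈ Tset M (fun i => b (i+1)) (n - a0),
            Xq ^ Esum (M+1) b (consF a0 a') *
              ((∏ i ∈ Finset.range (M+1), (Pq (b i - consF a0 a' i) * Pq (consF a0 a' i)))
                * Pq (consF a0 a' (M+1)))
            = (Xq ^ ((b 0 - a0)*(n - a0)) * (Pq (b 0 - a0) * Pq a0)) *
              (Xq ^ Esum M (fun i => b (i+1)) a' *
                ((∏ i ∈ Finset.range M, (Pq (b (i+1) - a' i) * Pq (a' i))) * Pq (a' M))) := by
          intro a' ha'
          rw [Esum_cons M b n a0 a' ha', pow_add]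
          have e1 : ∏ i ∈ Finset.range (M+1), (Pq (b i - consF a0 a' i) * Pq (consF a0 a' i))
              = (∏ i ∈ Finset.range M, (Pq (b (i+1) - a' i) * Pq (a' i)))
                * (Pq (b 0 - a0) * Pq a0) := by
            rw [Finset.prod_range_succ'
              (fun i => Pq (b i - consF a0 a' i) * Pq (consF a0 a' i)) M]
            rfl
          rw [e1]
          have e2 : consF a0 a' (M+1) = a' M := rfl
          rw [e2]
          ring
        rw [finsum_mem_congr rfl hval]
        rw [finsum_mem_finite_eq_sum _ (Tset_finite M (fun i => b (i+1)) (n - a0))]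
        rw [← Finset.mul_sum]
        rw [← finsum_mem_finite_eq_sum _ (Tset_finite M (fun i => b (i+1)) (n - a0))]
        rw [ih (fun i => b (i+1)) (n - a0)]
      rw [finsum_mem_congr rfl inner]
      rw [finsum_mem_coe_finset]
      have pull : ∑ a0 ∈ Finset.range (min (b 0) n + 1),
          Xq ^ ((b 0 - a0)*(n - a0)) * (Pq (b 0 - a0) * Pq a0) *
            (Pq (n - a0) * ∏ i ∈ Finset.range M, Pq (b (i+1)))
          = (∑ a0 ∈ Finset.range (min (b 0) n + 1),
              Xq ^ ((b 0 - a0)*(n - a0)) * (Pq (b 0 - a0) * Pq a0) * Pq (n - a0))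
            * ∏ i ∈ Finset.range M, Pq (b (i+1)) := by
        rw [Finset.sum_mul]
        exact Finset.sum_congr rfl (fun a0 _ => by ring)
      rw [pull, sum_T]
      rw [Finset.prod_range_succ' (fun i => Pq (b i)) M]
      ring
    · intro x _ y _ hxy
      simp only [Function.onFun, Set.disjoint_left]
      rintro a ⟨a1, _, rfl⟩ ⟨a2, _, ha2⟩
      exact hxy (by
        have := congrFun ha2 0
        exact this.symm)
    · exact (Finset.range (min (b 0) n + 1)).finite_toSet
    · intro a0 _
      exact (Tset_finite M (fun i => b (i+1)) (n - a0)).image _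

end Stuple


lemma Pq_ne_zero (s : ℕ) : Pq s ≠ 0 := by
  intro h
  have := QP_mul_Pq s
  rw [h, mul_zero] at this
  exact one_ne_zero this.symm

section Glue

def glueK (N : ℕ) (m' : ℕ → ℕ → ℕ) (a : ℕ → ℕ) : ℕ → ℕ → ℕ :=
  fun i j => if j = N+1 then a i else if j = N then m' i N - a i else m' i j

def piK (N : ℕ) (m : ℕ → ℕ → ℕ) : ℕ → ℕ → ℕ :=
  fun i j => if j = N ∧ i ≤ N then m i N + m i (N+1) else if i ≤ j ∧ j ≤ N then m i j else 0

lemma glueK_top (N : ℕ) (m' : ℕ → ℕ → ℕ) (a : ℕ → ℕ) (i : ℕ) :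
    glueK N m' a i (N+1) = a i := if_pos rfl

lemma glueK_N (N : ℕ) (m' : ℕ → ℕ → ℕ) (a : ℕ → ℕ) (i : ℕ) :
    glueK N m' a i N = m' i N - a i := by
  rw [glueK, if_neg (by omega), if_pos rfl]

lemma glueK_low (N : ℕ) (m' : ℕ → ℕ → ℕ) (a : ℕ → ℕ) (i j : ℕ) (h1 : j ≠ N+1) (h2 : j ≠ N) :
    glueK N m' a i j = m' i j := by
  rw [glueK, if_neg h1, if_neg h2]

/-- Row sums of the glued partition. -/
lemma glue_row_sum (N : ℕ) (m' : ℕ → ℕ → ℕ) (a : ℕ → ℕ)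
    (hb : ∀ i, i ≤ N → a i ≤ m' i N) (u j : ℕ) (hu : u ≤ N) (hj : j ≤ N) :
    ∑ v ∈ Finset.Icc j (N+1), glueK N m' a u v = ∑ v ∈ Finset.Icc j N, m' u v := by
  rw [Finset.sum_Icc_succ_top (by omega : j ≤ N+1), glueK_top]
  have key : ∀ v ∈ Finset.Icc j N, m' u v = glueK N m' a u v + (if v = N then a u else 0) := by
    intro v hv
    have hv' := Finset.mem_Icc.mp hv
    rcases eq_or_ne v N with rfl | hvN
    · rw [if_pos rfl, glueK_N]
      have := hb u hu
      omega
    · rw [if_neg hvN, add_zero, glueK_low _ _ _ _ _ (by omega) hvN]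
  rw [Finset.sum_congr rfl key, Finset.sum_add_distrib,
    Finset.sum_ite_eq' (Finset.Icc j N) N (fun _ => a u),
    if_pos (Finset.mem_Icc.mpr ⟨hj, le_refl N⟩)]

/-- factored form of `kpCodim`. -/
lemma kpCodim_factored (K : ℕ) (m : ℕ → ℕ → ℕ) :
    kpCodim K m = ∑ i ∈ Finset.Icc 1 K, ∑ u ∈ Finset.Icc i K,
      ∑ j ∈ Finset.Icc u K, m (i - 1) (j - 1) * ∑ v ∈ Finset.Icc j K, m u v := by
  rw [kpCodim]
  refine Finset.sum_congr rfl (fun i _ => Finset.sum_congr rfl (fun u _ =>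
    Finset.sum_congr rfl (fun j _ => (Finset.mul_sum _ _ _).symm)))

lemma Esum_swap (M : ℕ) (b a : ℕ → ℕ) :
    Esum M b a = ∑ i ∈ Finset.Icc 1 M, (b (i-1) - a (i-1)) * ∑ u ∈ Finset.Icc i M, a u := by
  induction M with
  | zero => simp [Esum]
  | succ M ih =>
    rw [Esum, Finset.sum_range_succ, ← Esum, ih]
    have key : ∀ i ∈ Finset.Icc 1 (M+1),
        (b (i-1) - a (i-1)) * ∑ u ∈ Finset.Icc i (M+1), a u
          = (b (i-1) - a (i-1)) * ∑ u ∈ Finset.Icc i M, a u + (b (i-1) - a (i-1)) * a (M+1) := by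
      intro i hi
      have hi' := Finset.mem_Icc.mp hi
      rw [Finset.sum_Icc_succ_top (by omega : i ≤ M+1), Nat.mul_add]
    rw [Finset.sum_congr rfl key, Finset.sum_add_distrib]
    rw [Finset.sum_Icc_succ_top (by omega : 1 ≤ M+1)
      (fun i => (b (i-1) - a (i-1)) * ∑ u ∈ Finset.Icc i M, a u)]
    rw [Finset.Icc_eq_empty (by omega : ¬ (M+1:ℕ) ≤ M), Finset.sum_empty, mul_zero, add_zero]
    have e2 : ∑ i ∈ Finset.Icc 1 (M+1), (b (i-1) - a (i-1)) * a (M+1)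
        = a (M+1) * ∑ i ∈ Finset.range (M+1), (b i - a i) := by
      rw [Finset.mul_sum]
      rw [show Finset.Icc 1 (M+1) = Finset.Ico 1 (M+2) from by
        rw [← Finset.Ico_add_one_right_eq_Icc]; rfl]
      rw [Finset.sum_Ico_eq_sum_range]
      refine Finset.sum_congr (by norm_num) (fun x _ => ?_)
      rw [show 1 + x - 1 = x from by omega, Nat.mul_comm]
    rw [e2]

lemma kpCodim_glue (N : ℕ) (m' : ℕ → ℕ → ℕ) (a : ℕ → ℕ)
    (hb : ∀ i, i ≤ N → a i ≤ m' i N) :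
    kpCodim (N+1) (glueK N m' a) = kpCodim N m' + Esum (N+1) (fun i => m' i N) a := by
  set g := glueK N m' a with hg
  rw [kpCodim_factored, kpCodim_factored, Esum_swap]
  have hj_level : ∀ i u, 1 ≤ i → i ≤ u → u ≤ N+1 →
      ∑ j ∈ Finset.Icc u (N+1), g (i-1) (j-1) * ∑ v ∈ Finset.Icc j (N+1), g u v
        = (∑ j ∈ Finset.Icc u N, m' (i-1) (j-1) * ∑ v ∈ Finset.Icc j N, m' u v)
          + (m' (i-1) N - a (i-1)) * a u := by
    intro i u hi hiu huN
    rw [Finset.sum_Icc_succ_top (by omega : u ≤ N+1)]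
    have htop : g (i-1) (N+1-1) * ∑ v ∈ Finset.Icc (N+1) (N+1), g u v
        = (m' (i-1) N - a (i-1)) * a u := by
      rw [Finset.Icc_self, Finset.sum_singleton, show N+1-1 = N from by omega, hg,
        glueK_N, glueK_top]
    rw [htop]
    congr 1
    refine Finset.sum_congr rfl (fun j hj => ?_)
    have hj' := Finset.mem_Icc.mp hj
    rw [glue_row_sum N m' a hb u j (by omega) (by omega)]
    rw [hg, glueK_low _ _ _ _ _ (by omega) (by omega)]
  have hu_level : ∀ i, 1 ≤ i → i ≤ N+1 →
      ∑ u ∈ Finset.Icc i (N+1), ∑ j ∈ Finset.Icc u (N+1), g (i-1) (j-1)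
          * ∑ v ∈ Finset.Icc j (N+1), g u v
        = (∑ u ∈ Finset.Icc i N, ∑ j ∈ Finset.Icc u N, m' (i-1) (j-1)
            * ∑ v ∈ Finset.Icc j N, m' u v)
          + (m' (i-1) N - a (i-1)) * ∑ u ∈ Finset.Icc i (N+1), a u := by
    intro i hi hiN
    rw [Finset.sum_congr rfl (fun u hu => hj_level i u hi (Finset.mem_Icc.mp hu).1
      (Finset.mem_Icc.mp hu).2), Finset.sum_add_distrib]
    congr 1
    · rw [Finset.sum_Icc_succ_top (by omega : i ≤ N+1), Finset.Icc_eq_empty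
        (by omega : ¬ (N+1:ℕ) ≤ N), Finset.sum_empty, add_zero]
    · rw [Finset.mul_sum]
  rw [Finset.sum_congr rfl (fun i hi => hu_level i (Finset.mem_Icc.mp hi).1
    (Finset.mem_Icc.mp hi).2), Finset.sum_add_distrib]
  congr 1
  rw [Finset.sum_Icc_succ_top (by omega : 1 ≤ N+1), Finset.Icc_eq_empty
    (by omega : ¬ (N+1:ℕ) ≤ N), Finset.sum_empty, add_zero]

end Glue

section Decomp

lemma kostant_bound {N : ℕ} {d : ℕ → ℕ} {m : ℕ → ℕ → ℕ} (h : IsKostant N d m) :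
    ∀ i j, m i j ≤ (fun i j => if i ≤ j ∧ j ≤ N then d i else 0) i j := by
  intro i j
  show m i j ≤ if i ≤ j ∧ j ≤ N then d i else 0
  split
  · rename_i hij
    rw [h.2 i (le_trans hij.1 hij.2)]
    calc m i j ≤ ∑ j' ∈ Finset.Icc i N, m i j' :=
      Finset.single_le_sum (fun _ _ => Nat.zero_le _) (Finset.mem_Icc.mpr hij)
    _ ≤ ∑ i' ∈ Finset.range (i+1), ∑ j' ∈ Finset.Icc i N, m i' j' :=
      Finset.single_le_sum (f := fun i' => ∑ j' ∈ Finset.Icc i N, m i' j')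
        (fun _ _ => Nat.zero_le _) (Finset.mem_range.mpr (by omega))
  · rename_i hij
    rw [h.1 i j hij]

lemma kostant_finite (N : ℕ) (d : ℕ → ℕ) : {m : ℕ → ℕ → ℕ | IsKostant N d m}.Finite := by
  apply (finite_bdd2 (fun i j => if i ≤ j ∧ j ≤ N then d i else 0) N
    (fun i j hij => by
      show (if i ≤ j ∧ j ≤ N then d i else 0) = 0
      rw [if_neg]; omega)).subset
  intro m hm
  exact kostant_bound hm

lemma piK_kostant {N : ℕ} {d : ℕ → ℕ} {m : ℕ → ℕ → ℕ} (h : IsKostant (N+1) d m) :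
    IsKostant N d (piK N m) := by
  constructor
  · intro i j hij
    rw [piK]
    rw [if_neg (by omega), if_neg hij]
  · intro k hk
    rw [h.2 k (by omega)]
    refine Finset.sum_congr rfl (fun i hi => ?_)
    have hik : i ≤ k := by
      have := Finset.mem_range.mp hi; omega
    have key : ∀ j ∈ Finset.Icc k N, piK N m i j = m i j + (if j = N then m i (N+1) else 0) := by
      intro j hj
      have hj' := Finset.mem_Icc.mp hj
      rw [piK]
      rcases eq_or_ne j N with rfl | hjN
      · rw [if_pos ⟨rfl, by omega⟩, if_pos rfl]
      · rw [if_neg (by tauto), if_pos ⟨by omega, by omega⟩, if_neg hjN, add_zero]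
    rw [Finset.sum_congr rfl key, Finset.sum_add_distrib,
      Finset.sum_ite_eq' (Finset.Icc k N) N (fun _ => m i (N+1)),
      if_pos (Finset.mem_Icc.mpr ⟨hk, le_refl N⟩),
      Finset.sum_Icc_succ_top (by omega : k ≤ N+1)]

lemma glueK_kostant {N : ℕ} {d : ℕ → ℕ} {m' : ℕ → ℕ → ℕ} {a : ℕ → ℕ}
    (h : IsKostant N d m') (ha : a ∈ Tset (N+1) (fun i => m' i N) (d (N+1))) :
    IsKostant (N+1) d (glueK N m' a) := by
  obtain ⟨ha1, ha2, ha3⟩ := ha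
  constructor
  · intro i j hij
    rcases eq_or_ne j (N+1) with rfl | hj1
    · rw [glueK_top]
      exact ha1 i (by omega)
    · rcases eq_or_ne j N with hj2 | hj2
      · rw [hj2, glueK_N, h.1 i N (by omega)]
        omega
      · rw [glueK_low _ _ _ _ _ hj1 hj2]
        exact h.1 i j (by omega)
  · intro k hk
    rcases eq_or_ne k (N+1) with rfl | hkN
    · rw [Finset.Icc_self]
      calc d (N+1) = ∑ i ∈ Finset.range (N+2), a i := ha3.symm
        _ = _ := Finset.sum_congr rfl (fun i _ => by
            rw [Finset.sum_singleton, glueK_top])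
    · have hkN' : k ≤ N := by omega
      rw [h.2 k hkN']
      refine Finset.sum_congr rfl (fun i hi => ?_)
      exact (glue_row_sum N m' a (fun i hi => ha2 i (by omega)) i k
        (by have := Finset.mem_range.mp hi; omega) hkN').symm

lemma glueK_piK {N : ℕ} {d : ℕ → ℕ} {m : ℕ → ℕ → ℕ} (h : IsKostant (N+1) d m) :
    glueK N (piK N m) (fun i => m i (N+1)) = m := by
  funext i j
  rcases eq_or_ne j (N+1) with rfl | hj1
  · rw [glueK_top]
  · rcases eq_or_ne j N with hj2 | hj2
    · rw [hj2, glueK_N, piK]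
      rcases le_or_gt i N with hi | hi
      · rw [if_pos ⟨rfl, hi⟩]
        omega
      · rw [if_neg (by omega), if_neg (by omega)]
        rw [h.1 i N (by omega)]
        omega
    · rw [glueK_low _ _ _ _ _ hj1 hj2, piK, if_neg (by tauto)]
      rcases le_or_gt j N with hj | hj
      · rcases le_or_gt i j with hij | hij
        · rw [if_pos ⟨hij, hj⟩]
        · rw [if_neg (by omega), h.1 i j (by omega)]
      · rw [if_neg (by omega), h.1 i j (by omega)]

lemma col_mem_Tset {N : ℕ} {d : ℕ → ℕ} {m : ℕ → ℕ → ℕ} (h : IsKostant (N+1) d m) :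
    (fun i => m i (N+1)) ∈ Tset (N+1) (fun i => piK N m i N) (d (N+1)) := by
  refine ⟨fun i hi => h.1 i (N+1) (by omega), fun i hi => ?_, ?_⟩
  · show m i (N+1) ≤ piK N m i N
    rw [piK, if_pos ⟨rfl, by omega⟩]
    omega
  · have h2 := h.2 (N+1) (le_refl _)
    rw [Finset.Icc_self] at h2
    calc ∑ i ∈ Finset.range (N+1+1), (fun i => m i (N+1)) i
        = ∑ i ∈ Finset.range (N+1+1), ∑ j ∈ ({N+1} : Finset ℕ), m i j :=
          Finset.sum_congr rfl (fun i _ => (Finset.sum_singleton _ _).symm)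
      _ = d (N+1) := h2.symm

lemma Kdecomp (N : ℕ) (d : ℕ → ℕ) :
    {m : ℕ → ℕ → ℕ | IsKostant (N+1) d m}
      = ⋃ m' ∈ {m' : ℕ → ℕ → ℕ | IsKostant N d m'},
          (glueK N m') '' Tset (N+1) (fun i => m' i N) (d (N+1)) := by
  ext m
  simp only [Set.mem_setOf_eq, Set.mem_iUnion, Set.mem_image]
  constructor
  · intro h
    exact ⟨piK N m, piK_kostant h, fun i => m i (N+1), col_mem_Tset h, glueK_piK h⟩
  · rintro ⟨m', hm', a, ha, rfl⟩
    exact glueK_kostant hm' ha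

lemma PqKP_glue (N : ℕ) (m' : ℕ → ℕ → ℕ) (a : ℕ → ℕ) :
    PqKP (N+1) (glueK N m' a) * ∏ i ∈ Finset.range (N+1), Pq (m' i N)
      = PqKP N m' * ((∏ i ∈ Finset.range (N+1), (Pq (m' i N - a i) * Pq (a i)))
          * Pq (a (N+1))) := by
  rw [PqKP, PqKP]
  rw [Finset.prod_range_succ (fun i => ∏ j ∈ Finset.Icc i (N+1), Pq (glueK N m' a i j)) (N+1)]
  rw [Finset.Icc_self, Finset.prod_singleton, glueK_top]
  have key : ∀ i, i ≤ N →
      (∏ j ∈ Finset.Icc i (N+1), Pq (glueK N m' a i j)) * Pq (m' i N)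
        = (∏ j ∈ Finset.Icc i N, Pq (m' i j)) * (Pq (m' i N - a i) * Pq (a i)) := by
    intro i hi
    rw [Finset.prod_Icc_succ_top (by omega : i ≤ N+1), glueK_top]
    have hN : N ∈ Finset.Icc i N := Finset.mem_Icc.mpr ⟨hi, le_refl N⟩
    rw [← Finset.prod_erase_mul (Finset.Icc i N) _ hN]
    rw [← Finset.prod_erase_mul (Finset.Icc i N) (fun j => Pq (m' i j)) hN]
    have e1 : ∀ j ∈ (Finset.Icc i N).erase N, Pq (glueK N m' a i j) = Pq (m' i j) := by
      intro j hj
      have hj1 := Finset.mem_erase.mp hj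
      have hj2 := Finset.mem_Icc.mp hj1.2
      rw [glueK_low _ _ _ _ _ (by omega) hj1.1]
    rw [Finset.prod_congr rfl e1, glueK_N]
    ring
  calc (∏ i ∈ Finset.range (N+1), ∏ j ∈ Finset.Icc i (N+1), Pq (glueK N m' a i j))
        * Pq (a (N+1)) * ∏ i ∈ Finset.range (N+1), Pq (m' i N)
      = (∏ i ∈ Finset.range (N+1), ((∏ j ∈ Finset.Icc i (N+1), Pq (glueK N m' a i j))
          * Pq (m' i N))) * Pq (a (N+1)) := by
        rw [Finset.prod_mul_distrib]
        ring
    _ = (∏ i ∈ Finset.range (N+1), ((∏ j ∈ Finset.Icc i N, Pq (m' i j))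
          * (Pq (m' i N - a i) * Pq (a i)))) * Pq (a (N+1)) := by
        rw [Finset.prod_congr rfl (fun i hi => key i (by
          have := Finset.mem_range.mp hi; omega))]
    _ = _ := by
        rw [Finset.prod_mul_distrib]
        ring

end Decomp

section TotalSum

lemma totalsum : ∀ (N : ℕ) (d : ℕ → ℕ),
    (∑ᶠ m ∈ {m : ℕ → ℕ → ℕ | IsKostant N d m}, Xq ^ kpCodim N m * PqKP N m)
      = ∏ i ∈ Finset.range (N+1), Pq (d i) := by
  intro N
  induction N with
  | zero =>
    intro d
    have hset : {m : ℕ → ℕ → ℕ | IsKostant 0 d m}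
        = {fun i j => if i = 0 ∧ j = 0 then d 0 else 0} := by
      ext m
      simp only [Set.mem_setOf_eq, Set.mem_singleton_iff]
      constructor
      · intro h
        funext i j
        rcases Decidable.em (i = 0 ∧ j = 0) with hij | hij
        · rw [if_pos hij, hij.1, hij.2]
          have := h.2 0 (le_refl 0)
          rw [Finset.sum_range_one, Finset.Icc_self, Finset.sum_singleton] at this
          exact this.symm
        · rw [if_neg hij, h.1 i j (by omega)]
      · rintro rfl
        constructor
        · intro i j hij
          show (if i = 0 ∧ j = 0 then d 0 else 0) = 0
          rw [if_neg (by omega)]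
        · intro k hk
          interval_cases k
          rw [Finset.sum_range_one, Finset.Icc_self, Finset.sum_singleton]
          show d 0 = if (0:ℕ) = 0 ∧ (0:ℕ) = 0 then d 0 else 0
          rw [if_pos ⟨rfl, rfl⟩]
    rw [hset, finsum_mem_singleton]
    have h1 : kpCodim 0 (fun i j => if i = 0 ∧ j = 0 then d 0 else 0) = 0 := by
      rw [kpCodim]
      simp
    have h2 : PqKP 0 (fun i j => if i = 0 ∧ j = 0 then d 0 else 0) = Pq (d 0) := by
      rw [PqKP]
      simp
    rw [h1, h2, pow_zero, one_mul, Finset.prod_range_one]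
  | succ N ih =>
    intro d
    rw [Kdecomp]
    rw [finsum_mem_biUnion ?hdisj (kostant_finite N d) ?hfin]
    case hdisj =>
      intro x hx y hy hxy
      simp only [Function.onFun, Set.disjoint_left]
      rintro m ⟨a1, ha1, rfl⟩ ⟨a2, ha2, hglue⟩
      apply hxy
      have e1 : piK N (glueK N x a1) = x := by
        funext i j
        rw [piK]
        rcases Decidable.em (j = N ∧ i ≤ N) with hc | hc
        · rw [if_pos hc, glueK_N, glueK_top, hc.1]
          have h5 : a1 i ≤ x i N := ha1.2.1 i (by omega)
          omega
        · rw [if_neg hc]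
          rcases Decidable.em (i ≤ j ∧ j ≤ N) with hc2 | hc2
          · rw [if_pos hc2, glueK_low _ _ _ _ _ (by omega) (by omega)]
          · rw [if_neg hc2, (hx.1 : ∀ i j, ¬(i ≤ j ∧ j ≤ N) → x i j = 0) i j (by tauto)]
      have e2 : piK N (glueK N y a2) = y := by
        funext i j
        rw [piK]
        rcases Decidable.em (j = N ∧ i ≤ N) with hc | hc
        · rw [if_pos hc, glueK_N, glueK_top, hc.1]
          have h5 : a2 i ≤ y i N := ha2.2.1 i (by omega)
          omega
        · rw [if_neg hc]
          rcases Decidable.em (i ≤ j ∧ j ≤ N) with hc2 | hc2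
          · rw [if_pos hc2, glueK_low _ _ _ _ _ (by omega) (by omega)]
          · rw [if_neg hc2, (hy.1 : ∀ i j, ¬(i ≤ j ∧ j ≤ N) → y i j = 0) i j (by tauto)]
      rw [← e1, ← e2, hglue]
    case hfin =>
      intro m' _
      exact (Tset_finite (N+1) (fun i => m' i N) (d (N+1))).image _
    have inner : ∀ m' ∈ {m' : ℕ → ℕ → ℕ | IsKostant N d m'},
        (∑ᶠ m ∈ (glueK N m') '' Tset (N+1) (fun i => m' i N) (d (N+1)),
          Xq ^ kpCodim (N+1) m * PqKP (N+1) m)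
          = (Xq ^ kpCodim N m' * PqKP N m') * Pq (d (N+1)) := by
      intro m' hm'
      have hinj : Set.InjOn (glueK N m') (Tset (N+1) (fun i => m' i N) (d (N+1))) := by
        intro a1 h1 a2 h2 he
        funext i
        have := congrFun (congrFun he i) (N+1)
        rwa [glueK_top, glueK_top] at this
      rw [finsum_mem_image hinj]
      set b : ℕ → ℕ := fun i => m' i N with hb
      set T := Tset (N+1) b (d (N+1)) with hT
      -- multiply both sides by ∏ Pq (b i), a unit
      have hcancel : ∀ x y : PowerSeries ℚ,
          x * ∏ i ∈ Finset.range (N+1), Pq (b i) = y * ∏ i ∈ Finset.range (N+1), Pq (b i)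
            → x = y := by
        intro x y hxy
        have hne : (∏ i ∈ Finset.range (N+1), Pq (b i)) ≠ 0 :=
          Finset.prod_ne_zero_iff.mpr (fun i _ => Pq_ne_zero _)
        exact mul_right_cancel₀ hne hxy
      apply hcancel
      rw [finsum_mem_finite_eq_sum T (Tset_finite _ _ _), Finset.sum_mul]
      have hterm : ∀ a ∈ (Tset_finite (N+1) b (d (N+1))).toFinset,
          Xq ^ kpCodim (N+1) (glueK N m' a) * PqKP (N+1) (glueK N m' a)
              * ∏ i ∈ Finset.range (N+1), Pq (b i)
            = (Xq ^ kpCodim N m' * PqKP N m')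
              * (Xq ^ Esum (N+1) b a
                * ((∏ i ∈ Finset.range (N+1), (Pq (b i - a i) * Pq (a i))) * Pq (a (N+1)))) := by
        intro a ha
        rw [Set.Finite.mem_toFinset] at ha
        have hba : ∀ i, i ≤ N → a i ≤ m' i N := fun i hi => ha.2.1 i (by omega)
        rw [kpCodim_glue N m' a hba, pow_add]
        have := PqKP_glue N m' a
        calc Xq ^ kpCodim N m' * Xq ^ Esum (N+1) b a * PqKP (N+1) (glueK N m' a)
              * ∏ i ∈ Finset.range (N+1), Pq (b i)
            = Xq ^ kpCodim N m' * Xq ^ Esum (N+1) b a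
              * (PqKP (N+1) (glueK N m' a) * ∏ i ∈ Finset.range (N+1), Pq (m' i N)) := by
              rw [hb]; ring
          _ = Xq ^ kpCodim N m' * Xq ^ Esum (N+1) b a
              * (PqKP N m' * ((∏ i ∈ Finset.range (N+1), (Pq (m' i N - a i) * Pq (a i)))
                  * Pq (a (N+1)))) := by rw [this]
          _ = _ := by rw [hb]; ring
      rw [Finset.sum_congr rfl hterm, ← Finset.mul_sum]
      rw [← finsum_mem_finite_eq_sum T (Tset_finite _ _ _)
        (fun a => Xq ^ Esum (N+1) b a
          * ((∏ i ∈ Finset.range (N+1), (Pq (b i - a i) * Pq (a i))) * Pq (a (N+1))))]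
      rw [hT, Stuple (N+1) b (d (N+1))]
      ring
    rw [finsum_mem_congr rfl inner]
    rw [finsum_mem_finite_eq_sum _ (kostant_finite N d), ← Finset.sum_mul,
      ← finsum_mem_finite_eq_sum _ (kostant_finite N d), ih d,
      Finset.prod_range_succ (fun i => Pq (d i)) (N+1)]

end TotalSum

section Partition

lemma dmin_le (N : ℕ) (d : ℕ → ℕ) {k : ℕ} (hk : k ≤ N) : dmin N d ≤ d k :=
  Finset.inf'_le d (Finset.mem_range.mpr (by omega))

lemma m0N_le {N : ℕ} {d : ℕ → ℕ} {m : ℕ → ℕ → ℕ} (h : IsKostant N d m) :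
    m 0 N ≤ dmin N d := by
  apply Finset.le_inf'
  intro k hk
  have hkN : k ≤ N := by
    have := Finset.mem_range.mp hk; omega
  rw [h.2 k hkN]
  calc m 0 N ≤ ∑ j ∈ Finset.Icc k N, m 0 j :=
    Finset.single_le_sum (fun _ _ => Nat.zero_le _) (Finset.mem_Icc.mpr ⟨hkN, le_refl N⟩)
  _ ≤ ∑ i ∈ Finset.range (k+1), ∑ j ∈ Finset.Icc k N, m i j :=
    Finset.single_le_sum (f := fun i => ∑ j ∈ Finset.Icc k N, m i j)
      (fun _ _ => Nat.zero_le _) (Finset.mem_range.mpr (by omega))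

lemma partitionQq (N : ℕ) (d : ℕ → ℕ) :
    ∏ i ∈ Finset.range (N+1), Pq (d i) = ∑ r ∈ Finset.range (dmin N d + 1), Qq N d r := by
  have hdec : {m : ℕ → ℕ → ℕ | IsKostant N d m}
      = ⋃ r ∈ (↑(Finset.range (dmin N d + 1)) : Set ℕ),
          {m : ℕ → ℕ → ℕ | IsKostant N d m ∧ m 0 N = r} := by
    ext m
    simp only [Set.mem_setOf_eq, Set.mem_iUnion, Finset.mem_coe, Finset.mem_range]
    constructor
    · intro h
      exact ⟨m 0 N, by have := m0N_le h; omega, h, rfl⟩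
    · rintro ⟨r, _, h, _⟩
      exact h
  rw [← totalsum N d, hdec, finsum_mem_biUnion]
  · rw [finsum_mem_coe_finset]
    rfl
  · intro x _ y _ hxy
    simp only [Function.onFun, Set.disjoint_left]
    rintro m ⟨_, rfl⟩ ⟨_, h2⟩
    exact hxy h2
  · exact (Finset.range (dmin N d + 1)).finite_toSet
  · intro r _
    exact ((kostant_finite N d).subset (fun m hm => hm.1))

end Partition

section Shift

lemma Qq_shift (N : ℕ) (d : ℕ → ℕ) (r : ℕ) (hr : ∀ k, k ≤ N → r ≤ d k) :
    Qq N d r = Pq r * Qq N (fun i => d i - r) 0 := by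
  set d' : ℕ → ℕ := fun i => d i - r with hd'
  set ψ : (ℕ → ℕ → ℕ) → (ℕ → ℕ → ℕ) :=
    fun m => fun i j => if i = 0 ∧ j = N then r else m i j with hψ
  have hψval : ∀ m i j, ψ m i j = if i = 0 ∧ j = N then r else m i j := fun m i j => rfl
  have hbij : Set.BijOn ψ {m : ℕ → ℕ → ℕ | IsKostant N d' m ∧ m 0 N = 0}
      {m : ℕ → ℕ → ℕ | IsKostant N d m ∧ m 0 N = r} := by
    refine ⟨?_, ?_, ?_⟩
    · rintro m ⟨⟨h1, h2⟩, h3⟩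
      refine ⟨⟨?_, ?_⟩, ?_⟩
      · intro i j hij
        rw [hψval, if_neg (by omega), h1 i j hij]
      · intro k hk
        have key : ∀ i ∈ Finset.range (k+1), ∑ j ∈ Finset.Icc k N, ψ m i j
            = (∑ j ∈ Finset.Icc k N, m i j) + (if i = 0 then r else 0) := by
          intro i hi
          have e : ∀ j ∈ Finset.Icc k N, ψ m i j = m i j + (if i = 0 ∧ j = N then r else 0) := by
            intro j hj
            rw [hψval]
            rcases Decidable.em (i = 0 ∧ j = N) with hc | hc
            · rw [if_pos hc, if_pos hc, hc.1, hc.2, h3]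
              omega
            · rw [if_neg hc, if_neg hc, add_zero]
          rw [Finset.sum_congr rfl e, Finset.sum_add_distrib]
          congr 1
          rcases Decidable.em (i = 0) with hi0 | hi0
          · subst hi0
            rw [if_pos rfl]
            have e2 : ∀ j ∈ Finset.Icc k N, (if (0:ℕ) = 0 ∧ j = N then r else 0)
                = if j = N then r else 0 := by
              intro j _
              rcases eq_or_ne j N with rfl | hjN
              · rw [if_pos ⟨rfl, rfl⟩, if_pos rfl]
              · rw [if_neg (by tauto), if_neg hjN]
            rw [Finset.sum_congr rfl e2, Finset.sum_ite_eq' (Finset.Icc k N) N (fun _ => r),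
              if_pos (Finset.mem_Icc.mpr ⟨hk, le_refl N⟩)]
          · rw [if_neg hi0]
            apply Finset.sum_eq_zero
            intro j _
            rw [if_neg (by tauto)]
        rw [Finset.sum_congr rfl key, Finset.sum_add_distrib]
        have e3 : ∑ i ∈ Finset.range (k+1), (if i = 0 then r else 0) = r := by
          rw [Finset.sum_ite_eq' (Finset.range (k+1)) 0 (fun _ => r),
            if_pos (Finset.mem_range.mpr (by omega))]
        rw [e3, ← h2 k hk]
        have := hr k hk
        show d k = d k - r + r
        omega
      · rw [hψval, if_pos ⟨rfl, rfl⟩]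
    · intro m1 h1 m2 h2 he
      funext i j
      rcases Decidable.em (i = 0 ∧ j = N) with hc | hc
      · rw [hc.1, hc.2, h1.2, h2.2]
      · have := congrFun (congrFun he i) j
        rwa [hψval, hψval, if_neg hc, if_neg hc] at this
    · rintro m ⟨⟨h1, h2⟩, h3⟩
      refine ⟨fun i j => if i = 0 ∧ j = N then 0 else m i j, ⟨⟨?_, ?_⟩, ?_⟩, ?_⟩
      · intro i j hij
        show (if i = 0 ∧ j = N then 0 else m i j) = 0
        rcases Decidable.em (i = 0 ∧ j = N) with hc | hc
        · rw [if_pos hc]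
        · rw [if_neg hc]
          exact h1 i j hij
      · intro k hk
        have key : ∀ i ∈ Finset.range (k+1), ∑ j ∈ Finset.Icc k N, m i j
            = (∑ j ∈ Finset.Icc k N, (if i = 0 ∧ j = N then 0 else m i j))
              + (if i = 0 then r else 0) := by
          intro i hi
          have e : ∀ j ∈ Finset.Icc k N, m i j
              = (if i = 0 ∧ j = N then 0 else m i j) + (if i = 0 ∧ j = N then r else 0) := by
            intro j hj
            rcases Decidable.em (i = 0 ∧ j = N) with hc | hc
            · rw [if_pos hc, if_pos hc, hc.1, hc.2, h3, zero_add]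
            · rw [if_neg hc, if_neg hc, add_zero]
          rw [Finset.sum_congr rfl e, Finset.sum_add_distrib]
          congr 1
          rcases Decidable.em (i = 0) with hi0 | hi0
          · subst hi0
            rw [if_pos rfl]
            have e2 : ∀ j ∈ Finset.Icc k N, (if (0:ℕ) = 0 ∧ j = N then r else 0)
                = if j = N then r else 0 := by
              intro j _
              rcases eq_or_ne j N with rfl | hjN
              · rw [if_pos ⟨rfl, rfl⟩, if_pos rfl]
              · rw [if_neg (by tauto), if_neg hjN]
            rw [Finset.sum_congr rfl e2, Finset.sum_ite_eq' (Finset.Icc k N) N (fun _ => r),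
              if_pos (Finset.mem_Icc.mpr ⟨hk, le_refl N⟩)]
          · rw [if_neg hi0]
            apply Finset.sum_eq_zero
            intro j _
            rw [if_neg (by tauto)]
        have e4 : d k = (∑ i ∈ Finset.range (k+1),
            ∑ j ∈ Finset.Icc k N, (if i = 0 ∧ j = N then 0 else m i j)) + r := by
          rw [h2 k hk, Finset.sum_congr rfl key, Finset.sum_add_distrib]
          congr 1
          rw [Finset.sum_ite_eq' (Finset.range (k+1)) 0 (fun _ => r),
            if_pos (Finset.mem_range.mpr (by omega))]
        show d k - r = ∑ i ∈ Finset.range (k+1), ∑ j ∈ Finset.Icc k N,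
          (if i = 0 ∧ j = N then 0 else m i j)
        omega
      · show (if (0:ℕ) = 0 ∧ N = N then 0 else m 0 N) = 0
        rw [if_pos ⟨rfl, rfl⟩]
      · funext i j
        show (if i = 0 ∧ j = N then r else if i = 0 ∧ j = N then 0 else m i j) = m i j
        rcases Decidable.em (i = 0 ∧ j = N) with hc | hc
        · rw [if_pos hc, hc.1, hc.2, h3]
        · rw [if_neg hc, if_neg hc]
  have hcodim : ∀ m ∈ {m : ℕ → ℕ → ℕ | IsKostant N d' m ∧ m 0 N = 0},
      kpCodim N (ψ m) = kpCodim N m := by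
    intro m _
    rw [kpCodim, kpCodim]
    refine Finset.sum_congr rfl (fun i hi => Finset.sum_congr rfl (fun u hu =>
      Finset.sum_congr rfl (fun j hj => Finset.sum_congr rfl (fun v hv => ?_))))
    have hi' := Finset.mem_Icc.mp hi
    have hu' := Finset.mem_Icc.mp hu
    have hj' := Finset.mem_Icc.mp hj
    have hv' := Finset.mem_Icc.mp hv
    rw [hψval, hψval, if_neg (by omega), if_neg (by omega)]
  have hPqKP : ∀ m ∈ {m : ℕ → ℕ → ℕ | IsKostant N d' m ∧ m 0 N = 0},
      PqKP N (ψ m) = Pq r * PqKP N m := by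
    rintro m ⟨_, h3⟩
    rw [PqKP, PqKP]
    rw [Finset.prod_range_succ' (fun i => ∏ j ∈ Finset.Icc i N, Pq (ψ m i j)) N]
    rw [Finset.prod_range_succ' (fun i => ∏ j ∈ Finset.Icc i N, Pq (m i j)) N]
    have e1 : ∀ x ∈ Finset.range N, ∏ j ∈ Finset.Icc (x+1) N, Pq (ψ m (x+1) j)
        = ∏ j ∈ Finset.Icc (x+1) N, Pq (m (x+1) j) := by
      intro x _
      refine Finset.prod_congr rfl (fun j _ => ?_)
      rw [hψval, if_neg (by omega)]
    rw [Finset.prod_congr rfl e1]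
    have hN : N ∈ Finset.Icc 0 N := Finset.mem_Icc.mpr ⟨Nat.zero_le _, le_refl N⟩
    rw [← Finset.prod_erase_mul (Finset.Icc 0 N) (fun j => Pq (ψ m 0 j)) hN]
    rw [← Finset.prod_erase_mul (Finset.Icc 0 N) (fun j => Pq (m 0 j)) hN]
    have e2 : ∀ j ∈ (Finset.Icc 0 N).erase N, Pq (ψ m 0 j) = Pq (m 0 j) := by
      intro j hj
      rw [hψval, if_neg (by
        have := (Finset.mem_erase.mp hj).1
        tauto)]
    rw [Finset.prod_congr rfl e2, hψval, if_pos ⟨rfl, rfl⟩, h3, Pq_zero]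
    ring
  set S0 := {m : ℕ → ℕ → ℕ | IsKostant N d' m ∧ m 0 N = 0} with hS0
  have hS0fin : S0.Finite := (kostant_finite N d').subset (fun m hm => hm.1)
  have heq : (∑ᶠ m ∈ S0,
        (PowerSeries.X : PowerSeries ℚ) ^ kpCodim N (ψ m) * PqKP N (ψ m))
      = ∑ᶠ m ∈ {m : ℕ → ℕ → ℕ | IsKostant N d m ∧ m 0 N = r},
        (PowerSeries.X : PowerSeries ℚ) ^ kpCodim N m * PqKP N m :=
    finsum_mem_eq_of_bijOn ψ hbij (fun x _ => rfl)
  have hcongr : (∑ᶠ m ∈ S0,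
        (PowerSeries.X : PowerSeries ℚ) ^ kpCodim N (ψ m) * PqKP N (ψ m))
      = ∑ᶠ m ∈ S0, Pq r * ((PowerSeries.X : PowerSeries ℚ) ^ kpCodim N m * PqKP N m) :=
    finsum_mem_congr rfl (fun m hm => by rw [hcodim m hm, hPqKP m hm]; ring)
  unfold Qq
  rw [← heq, hcongr, finsum_mem_finite_eq_sum S0 hS0fin, ← Finset.mul_sum,
    ← finsum_mem_finite_eq_sum S0 hS0fin]

end Shift

section Final

lemma dmin_shift (N : ℕ) (d : ℕ → ℕ) (r : ℕ) (hr : r ≤ dmin N d) :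
    dmin N (fun i => d i - r) = dmin N d - r := by
  apply le_antisymm
  · obtain ⟨k, hk, he⟩ := Finset.exists_mem_eq_inf' (s := Finset.range (N+1))
      ⟨0, by simp⟩ d
    calc dmin N (fun i => d i - r) ≤ d k - r :=
      Finset.inf'_le (fun i => d i - r) hk
    _ = dmin N d - r := by rw [dmin, ← he]
  · apply Finset.le_inf'
    intro k hk
    have h1 : dmin N d ≤ d k := Finset.inf'_le d hk
    show dmin N d - r ≤ d k - r
    omega

/-- Triangle reindexing. -/
lemma sum_triangle (M : ℕ) (f : ℕ → ℕ → PowerSeries ℚ) :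
    ∑ r ∈ Finset.range (M+1), ∑ s ∈ Finset.range (M-r+1), f r s
      = ∑ n ∈ Finset.range (M+1), ∑ r ∈ Finset.range (n+1), f r (n-r) := by
  rw [Finset.sum_sigma', Finset.sum_sigma']
  refine Finset.sum_nbij' (fun p => ⟨p.1 + p.2, p.1⟩) (fun p => ⟨p.2, p.1 - p.2⟩)
    ?_ ?_ ?_ ?_ ?_
  · rintro ⟨r, s⟩ hp
    simp only [Finset.mem_sigma, Finset.mem_range] at hp ⊢
    omega
  · rintro ⟨n, r⟩ hp
    simp only [Finset.mem_sigma, Finset.mem_range] at hp ⊢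
    omega
  · rintro ⟨r, s⟩ hp
    simp only [Finset.mem_sigma, Finset.mem_range] at hp
    simp only [Sigma.mk.inj_iff]
    exact ⟨trivial, heq_of_eq (by omega)⟩
  · rintro ⟨n, r⟩ hp
    simp only [Finset.mem_sigma, Finset.mem_range] at hp
    simp only [Sigma.mk.inj_iff]
    exact ⟨by omega, HEq.rfl⟩
  · rintro ⟨r, s⟩ hp
    simp only [Finset.mem_sigma, Finset.mem_range] at hp
    show f r s = f r (r + s - r)
    rw [show r + s - r = s from by omega]

/-- The inversion identity. -/
lemma inversion (M : ℕ) (F : ℕ → PowerSeries ℚ) :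
    ∑ r ∈ Finset.range (M+1), Pq r * ∑ s ∈ Finset.range (M-r+1),
        (-1 : PowerSeries ℚ)^s * Xq^(s.choose 2) * Pq s * F (r+s)
      = F 0 := by
  have e1 : ∀ r ∈ Finset.range (M+1), Pq r * ∑ s ∈ Finset.range (M-r+1),
      (-1 : PowerSeries ℚ)^s * Xq^(s.choose 2) * Pq s * F (r+s)
        = ∑ s ∈ Finset.range (M-r+1),
          (-1 : PowerSeries ℚ)^s * Xq^(s.choose 2) * Pq s * Pq r * F (r+s) := by
    intro r _
    rw [Finset.mul_sum]
    exact Finset.sum_congr rfl (fun s _ => by ring)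
  rw [Finset.sum_congr rfl e1]
  rw [sum_triangle M (fun r s => (-1 : PowerSeries ℚ)^s * Xq^(s.choose 2) * Pq s * Pq r * F (r+s))]
  have e2 : ∀ n ∈ Finset.range (M+1), ∑ r ∈ Finset.range (n+1),
      (-1 : PowerSeries ℚ)^(n-r) * Xq^((n-r).choose 2) * Pq (n-r) * Pq r * F (r+(n-r))
        = (if n = 0 then 1 else 0) * F n := by
    intro n _
    have e3 : ∀ r ∈ Finset.range (n+1),
        (-1 : PowerSeries ℚ)^(n-r) * Xq^((n-r).choose 2) * Pq (n-r) * Pq r * F (r+(n-r))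
          = ((-1 : PowerSeries ℚ)^(n-r) * Xq^((n-r).choose 2) * Pq (n-r) * Pq (n-(n-r))) * F n := by
      intro r hr
      have hr' := Finset.mem_range.mp hr
      rw [show r + (n-r) = n from by omega, show n - (n-r) = r from by omega]
    rw [Finset.sum_congr rfl e3, ← Finset.sum_mul]
    congr 1
    rw [← Pq_alt n]
    rw [← Finset.sum_range_reflect
      (fun s => (-1 : PowerSeries ℚ)^s * Xq^(s.choose 2) * Pq s * Pq (n-s)) (n+1)]
    exact Finset.sum_congr rfl (fun r _ => by rw [show n + 1 - 1 - r = n - r from by omega])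
  rw [Finset.sum_congr rfl e2]
  rw [Finset.sum_eq_single_of_mem 0 (Finset.mem_range.mpr (by omega))]
  · rw [if_pos rfl, one_mul]
  · intro n _ hn
    rw [if_neg hn, zero_mul]

lemma Q0_formula (N : ℕ) : ∀ (M : ℕ) (d : ℕ → ℕ), dmin N d = M →
    Qq N d 0 = ∑ s ∈ Finset.range (M+1),
      (-1 : PowerSeries ℚ)^s * Xq^(s.choose 2) * Pq s
        * ∏ i ∈ Finset.range (N+1), Pq (d i - s) := by
  intro M
  induction M using Nat.strong_induction_on with
  | _ M ihM =>
    intro d hdM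
    have hA : ∏ i ∈ Finset.range (N+1), Pq (d i) = ∑ r ∈ Finset.range (M+1), Qq N d r := by
      rw [partitionQq N d, hdM]
    have hshift : ∀ r, r ≤ M → Qq N d r = Pq r * Qq N (fun i => d i - r) 0 := by
      intro r hrM
      exact Qq_shift N d r (fun k hk => le_trans (by omega : r ≤ dmin N d) (dmin_le N d hk))
    have hIH : ∀ r, 1 ≤ r → r ≤ M → Qq N (fun i => d i - r) 0
        = ∑ s ∈ Finset.range (M-r+1), (-1 : PowerSeries ℚ)^s * Xq^(s.choose 2) * Pq s
            * ∏ i ∈ Finset.range (N+1), Pq (d i - r - s) := by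
      intro r h1r hrM
      have := ihM (M - r) (by omega) (fun i => d i - r)
        (by rw [dmin_shift N d r (by omega), hdM])
      exact this
    have hC : ∑ r ∈ Finset.range (M+1), Pq r * ∑ s ∈ Finset.range (M-r+1),
        (-1 : PowerSeries ℚ)^s * Xq^(s.choose 2) * Pq s
          * ∏ i ∈ Finset.range (N+1), Pq (d i - r - s)
        = ∏ i ∈ Finset.range (N+1), Pq (d i) := by
      have := inversion M (fun n => ∏ i ∈ Finset.range (N+1), Pq (d i - n))
      calc ∑ r ∈ Finset.range (M+1), Pq r * ∑ s ∈ Finset.range (M-r+1),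
          (-1 : PowerSeries ℚ)^s * Xq^(s.choose 2) * Pq s
            * ∏ i ∈ Finset.range (N+1), Pq (d i - r - s)
          = ∑ r ∈ Finset.range (M+1), Pq r * ∑ s ∈ Finset.range (M-r+1),
            (-1 : PowerSeries ℚ)^s * Xq^(s.choose 2) * Pq s
              * ∏ i ∈ Finset.range (N+1), Pq (d i - (r+s)) := by
            refine Finset.sum_congr rfl (fun r _ => ?_)
            congr 1
            refine Finset.sum_congr rfl (fun s _ => ?_)
            congr 1
            exact Finset.prod_congr rfl (fun i _ => by rw [Nat.sub_sub])
        _ = ∏ i ∈ Finset.range (N+1), Pq (d i - 0) := this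
        _ = ∏ i ∈ Finset.range (N+1), Pq (d i) := by
            exact Finset.prod_congr rfl (fun i _ => by rw [Nat.sub_zero])
    -- combine
    have main : ∑ r ∈ Finset.range (M+1), Pq r * Qq N (fun i => d i - r) 0
        = ∑ r ∈ Finset.range (M+1), Pq r * ∑ s ∈ Finset.range (M-r+1),
          (-1 : PowerSeries ℚ)^s * Xq^(s.choose 2) * Pq s
            * ∏ i ∈ Finset.range (N+1), Pq (d i - r - s) := by
      rw [← Finset.sum_congr rfl (fun r hr => hshift r (by
        have := Finset.mem_range.mp hr; omega)), ← hA, ← hC]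
    rw [Finset.sum_range_succ' (fun r => Pq r * Qq N (fun i => d i - r) 0) M] at main
    rw [Finset.sum_range_succ' (fun r => Pq r * ∑ s ∈ Finset.range (M-r+1),
      (-1 : PowerSeries ℚ)^s * Xq^(s.choose 2) * Pq s
        * ∏ i ∈ Finset.range (N+1), Pq (d i - r - s)) M] at main
    have hIH2 : ∀ x ∈ Finset.range M, Pq (x+1) * Qq N (fun i => d i - (x+1)) 0
        = Pq (x+1) * ∑ s ∈ Finset.range (M-(x+1)+1),
          (-1 : PowerSeries ℚ)^s * Xq^(s.choose 2) * Pq s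
            * ∏ i ∈ Finset.range (N+1), Pq (d i - (x+1) - s) := by
      intro x hx
      rw [hIH (x+1) (by omega) (by have := Finset.mem_range.mp hx; omega)]
    rw [Finset.sum_congr rfl hIH2] at main
    have main2 : Pq 0 * Qq N (fun i => d i - 0) 0
        = Pq 0 * ∑ s ∈ Finset.range (M-0+1),
          (-1 : PowerSeries ℚ)^s * Xq^(s.choose 2) * Pq s
            * ∏ i ∈ Finset.range (N+1), Pq (d i - 0 - s) := by
      exact add_left_cancel main
    rw [Pq_zero, one_mul, one_mul] at main2
    have hd0 : (fun i => d i - 0) = d := by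
      funext i; omega
    rw [hd0] at main2
    rw [main2]
    refine Finset.sum_congr (by norm_num) (fun s _ => ?_)
    congr 1

/-- The formula `Q^r_d = P_r · Σ_{s=0}^{min d − r} (−1)^s q^{s(s−1)/2} P_s P_{d−r−s}`. -/
theorem stmt5 (N : ℕ) (hN : 1 ≤ N) (d : ℕ → ℕ) (r : ℕ)
    (hr : r ≤ dmin N d) :
    Qq N d r =
      Pq r * ∑ s ∈ Finset.range (dmin N d - r + 1),
        (-1 : PowerSeries ℚ) ^ s * (PowerSeries.X : PowerSeries ℚ) ^ s.choose 2 *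
          Pq s * ∏ i ∈ Finset.range (N + 1), Pq (d i - r - s) := by
  rw [Qq_shift N d r (fun k hk => le_trans hr (dmin_le N d hk))]
  congr 1
  rw [Q0_formula N (dmin N d - r) (fun i => d i - r) (dmin_shift N d r hr)]

end Final
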